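/- Let (X₁,X₂) be bivariate Student-t with ν > 0 degrees of freedom and correlation ρ ∈ (−1,1). Then the conditional probability P[X₁ ≤ x_p | X₂ = x_p], where x_p = T_ν⁻¹(p), equals T_{ν+1}(k(p)) with k(p) = √(ν+1)·(x_p − ρx_p)/√((1−ρ²)(ν + x_p²)); here T_ν denotes the univariate Student-t cdf with ν degrees of freedom. -/

import Mathlib

open MeasureTheory Real

/-- Univariate Student-t density with `ν` degrees of freedom. -/
noncomputable def studentDensity (ν x : ℝ) : ℝ :=
  Real.Gamma ((ν + 1) / 2) / (Real.sqrt (ν * π) * Real.Gamma (ν / 2)) *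
    (1 + x ^ 2 / ν) ^ (-((ν + 1) / 2))

/-- Univariate Student-t cdf with `ν` degrees of freedom. -/
noncomputable def studentCdf (ν x : ℝ) : ℝ :=
  ∫ t in Set.Iic x, studentDensity ν t

/-- Bivariate Student-t density with `ν` degrees of freedom and correlation `ρ`. -/
noncomputable def studentDensity2 (ν ρ x₁ x₂ : ℝ) : ℝ :=
  Real.Gamma ((ν + 2) / 2) / (Real.Gamma (ν / 2) * ν * π * Real.sqrt (1 - ρ ^ 2)) *
    (1 + (x₁ ^ 2 - 2 * ρ * x₁ * x₂ + x₂ ^ 2) / (ν * (1 - ρ ^ 2))) ^ (-((ν + 2) / 2))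

/-
Completing the square in `x₁`,
`ν(1-ρ²) + x₁² - 2ρx₁x₂ + x₂² = (1-ρ²)(ν + x₂²) + (x₁ - ρx₂)²`, so the kernel of the bivariate
density splits as `(1 + x₂²/ν) · (1 + u²/(ν+1))` with `u = (x₁ - ρx₂)/s` and
`s² = (1-ρ²)(ν + x₂²)/(ν+1)`; the Gamma and `π` constants match up to the Jacobian `s⁻¹`.
Hence `t_ν(x₁, x₂) = t_ν(x₂) · s⁻¹ t_{ν+1}(u)`: given `X₂ = x₂`, `X₁` is a shifted and scaled
`t_{ν+1}` variable, and integrating over `x₁ ≤ x_p` gives `t_ν(x_p) · T_{ν+1}((x_p - ρx_p)/s)`.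
-/

open Set

lemma studentDensity_pos {ν : ℝ} (hν : 0 < ν) (x : ℝ) : 0 < studentDensity ν x := by
  have := Gamma_pos_of_pos (by linarith : 0 < (ν + 1) / 2)
  have := Gamma_pos_of_pos (by linarith : 0 < ν / 2)
  unfold studentDensity
  positivity

theorem setIntegral_Iic_comp_sub_div {E : Type*} [NormedAddCommGroup E] [NormedSpace ℝ E]
    (f : ℝ → E) {s : ℝ} (hs : 0 < s) (m a : ℝ) :
    ∫ x in Iic a, f ((x - m) / s) = s • ∫ t in Iic ((a - m) / s), f t := by
  have hpre : Iic a = (fun x => (x - m) / s) ⁻¹' Iic ((a - m) / s) := by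
    ext x
    simp [div_le_div_iff_of_pos_right hs]
  rw [← integral_indicator measurableSet_Iic, ← integral_indicator measurableSet_Iic]
  simp_rw [hpre, ← Function.comp_def f, indicator_comp_right, sub_div]
  rw [Measure.integral_comp_div (fun y => (Iic (a / s - m / s)).indicator f (y - m / s)) s,
    integral_sub_right_eq_self, abs_of_pos hs]

/-- The scale of the conditional law of `X₁` given `X₂ = y`. -/
noncomputable def condScale (ν ρ y : ℝ) : ℝ :=
  √((1 - ρ ^ 2) * (ν + y ^ 2) / (ν + 1))

lemma condScale_pos {ν ρ : ℝ} (hν : 0 < ν) (hρ₁ : -1 < ρ) (hρ₂ : ρ < 1) (y : ℝ) :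
    0 < condScale ν ρ y := by
  have : 0 < 1 - ρ ^ 2 := by nlinarith
  unfold condScale
  positivity

lemma one_add_quadForm_eq_mul {ν ρ : ℝ} (hν : 0 < ν) (hρ₁ : -1 < ρ) (hρ₂ : ρ < 1) (x y : ℝ) :
    1 + (x ^ 2 - 2 * ρ * x * y + y ^ 2) / (ν * (1 - ρ ^ 2)) =
      (1 + y ^ 2 / ν) * (1 + ((x - ρ * y) / condScale ν ρ y) ^ 2 / (ν + 1)) := by
  have hρ : 0 < 1 - ρ ^ 2 := by nlinarith
  have hs2 : condScale ν ρ y ^ 2 = (1 - ρ ^ 2) * (ν + y ^ 2) / (ν + 1) :=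
    sq_sqrt (by positivity)
  rw [div_pow, hs2]
  field_simp
  ring

lemma studentDensity2_eq_mul {ν ρ : ℝ} (hν : 0 < ν) (hρ₁ : -1 < ρ) (hρ₂ : ρ < 1) (x y : ℝ) :
    studentDensity2 ν ρ x y = studentDensity ν y *
      ((condScale ν ρ y)⁻¹ * studentDensity (ν + 1) ((x - ρ * y) / condScale ν ρ y)) := by
  have hρ : 0 < 1 - ρ ^ 2 := by nlinarith
  have hA : 0 < 1 + y ^ 2 / ν := by positivity
  have hB : 0 < 1 + ((x - ρ * y) / condScale ν ρ y) ^ 2 / (ν + 1) := by positivity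
  have hscale : condScale ν ρ y = √(1 - ρ ^ 2) * √(ν + y ^ 2) / √(ν + 1) := by
    rw [condScale, sqrt_div' _ (by linarith), sqrt_mul hρ.le]
  have hsqrtA : (1 + y ^ 2 / ν) ^ (-(1 / 2 : ℝ)) = √ν / √(ν + y ^ 2) := by
    rw [rpow_neg hA.le, ← sqrt_eq_rpow, one_add_div hν.ne', sqrt_div' _ hν.le, inv_div]
  have hsplitA : (1 + y ^ 2 / ν) ^ (-((ν + 2) / 2)) =
      (1 + y ^ 2 / ν) ^ (-((ν + 1) / 2)) * (1 + y ^ 2 / ν) ^ (-(1 / 2 : ℝ)) := by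
    rw [← rpow_add hA]
    ring_nf
  unfold studentDensity2 studentDensity
  rw [one_add_quadForm_eq_mul hν hρ₁ hρ₂, mul_rpow hA.le hB.le, hsplitA, hsqrtA,
    show ν + 1 + 1 = ν + 2 by ring]
  generalize (1 + ((x - ρ * y) / condScale ν ρ y) ^ 2 / (ν + 1)) ^ (-((ν + 2) / 2)) = b
  rw [hscale, sqrt_mul hν.le, sqrt_mul (by linarith : 0 ≤ ν + 1)]
  have := Gamma_pos_of_pos (by linarith : 0 < (ν + 1) / 2)
  have := Gamma_pos_of_pos (by linarith : 0 < ν / 2)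
  have := sqrt_pos.2 (by positivity : 0 < ν + y ^ 2)
  field_simp
  rw [sq_sqrt hν.le, sq_sqrt pi_pos.le]
  ring

theorem setIntegral_Iic_studentDensity2 {ν ρ : ℝ} (hν : 0 < ν) (hρ₁ : -1 < ρ) (hρ₂ : ρ < 1)
    (a y : ℝ) :
    ∫ x in Iic a, studentDensity2 ν ρ x y =
      studentDensity ν y * studentCdf (ν + 1) ((a - ρ * y) / condScale ν ρ y) := by
  have hs := condScale_pos hν hρ₁ hρ₂ y
  simp_rw [studentDensity2_eq_mul hν hρ₁ hρ₂, integral_const_mul,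
    setIntegral_Iic_comp_sub_div _ hs, smul_eq_mul, inv_mul_cancel_left₀ hs.ne', studentCdf]

theorem stmt_14_general (ν ρ xp : ℝ) (hν : 0 < ν) (hρ₁ : -1 < ρ) (hρ₂ : ρ < 1) :
    (∫ x₁ in Set.Iic xp, studentDensity2 ν ρ x₁ xp) / studentDensity ν xp =
      studentCdf (ν + 1)
        (Real.sqrt (ν + 1) * (xp - ρ * xp) / Real.sqrt ((1 - ρ ^ 2) * (ν + xp ^ 2))) := by
  rw [setIntegral_Iic_studentDensity2 hν hρ₁ hρ₂,
    mul_div_cancel_left₀ _ (studentDensity_pos hν xp).ne',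
    condScale, sqrt_div' _ (by linarith), div_div_eq_mul_div, mul_comm]

/-- For a bivariate Student-t pair with `ν` degrees of freedom and correlation `ρ`,
the conditional probability `P[X₁ ≤ x_p | X₂ = x_p]`, with `x_p = T_ν⁻¹(p)`, equals
`T_{ν+1}(k(p))` where `k(p) = √(ν+1)·(x_p - ρ x_p)/√((1-ρ²)(ν + x_p²))`. -/
theorem stmt_14 (ν ρ p xp : ℝ) (hν : 0 < ν) (hρ₁ : -1 < ρ) (hρ₂ : ρ < 1)
    (hp : p ∈ Set.Ioo (0 : ℝ) 1) (hxp : studentCdf ν xp = p) :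
    (∫ x₁ in Set.Iic xp, studentDensity2 ν ρ x₁ xp) / studentDensity ν xp =
      studentCdf (ν + 1)
        (Real.sqrt (ν + 1) * (xp - ρ * xp) / Real.sqrt ((1 - ρ ^ 2) * (ν + xp ^ 2))) :=
  stmt_14_general ν ρ xp hν hρ₁ hρ₂
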